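/- arXiv:1702.06829 — 8 statements merged into one kernel-verified Lean document; each statement's English description precedes it below -/
import Mathlib

section
/- Let C₁ and C₂ be two northwest monotone convex chains such that C₁ precedes C₂ (the x-coordinate of the last point of C₁ is less than the x-coordinate of the first point of C₂) and the y-coordinate of the last point of C₁ is less than the y-coordinate of the last point of C₂. Then there exist a point p₁ in C₁ and a point p₂ in C₂ such that the line through p₁ and p₂ has no point of C₁ or C₂ strictly above it (a common tangent bridge exists). -/
/-!
Fix a vertical line `x = x₀` separating the two chains and, among all segments from a point of
`C₁` to a point of `C₂`, take one whose crossing with `x = x₀` is highest. If some chain point `q`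
lay strictly above its line, replacing the endpoint on `q`'s side of `x = x₀` by `q` would give a
segment crossing `x = x₀` even higher.
-/

/- Cross product test: `cross a b q > 0` means `q` is strictly above the (directed) line
through `a` and `b` (with `a.1 < b.1`). -/
def cross (a b q : ℝ × ℝ) : ℝ :=
  (b.1 - a.1) * (q.2 - a.2) - (b.2 - a.2) * (q.1 - a.1)

/- A northwest monotone convex chain: strictly increasing x- and y-coordinates, and no
point of the chain lies strictly above the line through any two consecutive chain points. -/
def IsNWChain (l : List (ℝ × ℝ)) : Prop :=
  l.Chain' (fun a b => a.1 < b.1) ∧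
  l.Chain' (fun a b => a.2 < b.2) ∧
  ∀ i, (h : i + 1 < l.length) → ∀ q ∈ l,
    cross (l[i]'(Nat.lt_of_succ_lt h)) (l[i+1]'h) q ≤ 0

theorem List.IsChain.forall_lt_of_getLast_lt_head {α β : Type*} [Preorder β] {f : α → β}
    {l₁ l₂ : List α} (h₁ : l₁.IsChain (fun a b => f a < f b))
    (h₂ : l₂.IsChain (fun a b => f a < f b))
    (hne₁ : l₁ ≠ []) (hne₂ : l₂ ≠ []) (h : f (l₁.getLast hne₁) < f (l₂.head hne₂)) :
    ∀ a ∈ l₁, ∀ b ∈ l₂, f a < f b := by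
  have : Trans (fun a b => f a < f b) (fun a b => f a < f b) (fun a b => f a < f b) :=
    ⟨lt_trans⟩
  refine (List.pairwise_append.1 (h₁.append h₂ ?_).pairwise).2.2
  simpa [List.getLast?_eq_some_getLast hne₁, List.head?_eq_some_head hne₂] using h

noncomputable def lineAt (a b : ℝ × ℝ) (x : ℝ) : ℝ :=
  a.2 + (b.2 - a.2) / (b.1 - a.1) * (x - a.1)

theorem lineAt_lt_lineAt_left {a b q : ℝ × ℝ} {x : ℝ} (ha : a.1 < b.1) (hq : q.1 < b.1)
    (hx : x < b.1) (hcross : 0 < cross a b q) : lineAt a b x < lineAt q b x := by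
  have key : lineAt q b x - lineAt a b x =
      (b.1 - x) * cross a b q / ((b.1 - a.1) * (b.1 - q.1)) := by
    unfold lineAt cross
    field_simp [(sub_pos.2 ha).ne', (sub_pos.2 hq).ne']
    ring
  rw [← sub_pos, key]
  exact div_pos (mul_pos (sub_pos.2 hx) hcross) (mul_pos (sub_pos.2 ha) (sub_pos.2 hq))

theorem lineAt_lt_lineAt_right {a b q : ℝ × ℝ} {x : ℝ} (hb : a.1 < b.1) (hq : a.1 < q.1)
    (hx : a.1 < x) (hcross : 0 < cross a b q) : lineAt a b x < lineAt a q x := by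
  have key : lineAt a q x - lineAt a b x =
      (x - a.1) * cross a b q / ((b.1 - a.1) * (q.1 - a.1)) := by
    unfold lineAt cross
    field_simp [(sub_pos.2 hb).ne', (sub_pos.2 hq).ne']
    ring
  rw [← sub_pos, key]
  exact div_pos (mul_pos (sub_pos.2 hx) hcross) (mul_pos (sub_pos.2 hb) (sub_pos.2 hq))

theorem exists_bridge_of_fst_lt_of_lt_fst {s t : Finset (ℝ × ℝ)} (hs : s.Nonempty)
    (ht : t.Nonempty) {x : ℝ} (hsx : ∀ p ∈ s, p.1 < x) (htx : ∀ p ∈ t, x < p.1) :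
    ∃ a ∈ s, ∃ b ∈ t, ∀ q ∈ s ∪ t, cross a b q ≤ 0 := by
  obtain ⟨⟨a, b⟩, hab, hmax⟩ :=
    (s ×ˢ t).exists_max_image (fun p => lineAt p.1 p.2 x) (hs.product ht)
  obtain ⟨ha, hb⟩ := Finset.mem_product.1 hab
  have hlt : a.1 < b.1 := (hsx a ha).trans (htx b hb)
  refine ⟨a, ha, b, hb, fun q hq => not_lt.1 fun hcross => ?_⟩
  rcases Finset.mem_union.1 hq with hq | hq
  · exact (hmax (q, b) (Finset.mem_product.2 ⟨hq, hb⟩)).not_gt <|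
      lineAt_lt_lineAt_left hlt ((hsx q hq).trans (htx b hb)) (htx b hb) hcross
  · exact (hmax (a, q) (Finset.mem_product.2 ⟨ha, hq⟩)).not_gt <|
      lineAt_lt_lineAt_right hlt ((hsx a ha).trans (htx q hq)) (hsx a ha) hcross

theorem exists_bridge_of_forall_fst_lt {s t : Finset (ℝ × ℝ)} (hs : s.Nonempty)
    (ht : t.Nonempty) (hst : ∀ a ∈ s, ∀ b ∈ t, a.1 < b.1) :
    ∃ a ∈ s, ∃ b ∈ t, ∀ q ∈ s ∪ t, cross a b q ≤ 0 := by
  obtain ⟨a₀, ha₀, hmax⟩ := s.exists_max_image Prod.fst hs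
  obtain ⟨b₀, hb₀, hmin⟩ := t.exists_min_image Prod.fst ht
  have hlt := hst a₀ ha₀ b₀ hb₀
  exact exists_bridge_of_fst_lt_of_lt_fst hs ht (x := (a₀.1 + b₀.1) / 2)
    (fun p hp => by linarith [hmax p hp]) (fun p hp => by linarith [hmin p hp])

theorem bridge_exists_general (l₁ l₂ : List (ℝ × ℝ)) (h₁ : IsNWChain l₁) (h₂ : IsNWChain l₂)
    (hne₁ : l₁ ≠ []) (hne₂ : l₂ ≠ [])
    (hprec : (l₁.getLast hne₁).1 < (l₂.head hne₂).1) :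
    ∃ p₁ ∈ l₁, ∃ p₂ ∈ l₂, ∀ q, (q ∈ l₁ ∨ q ∈ l₂) → cross p₁ p₂ q ≤ 0 := by
  classical
  have hsep := List.IsChain.forall_lt_of_getLast_lt_head h₁.1 h₂.1 hne₁ hne₂ hprec
  obtain ⟨p₁, hp₁, p₂, hp₂, hbridge⟩ := exists_bridge_of_forall_fst_lt
    (List.toFinset_nonempty_iff l₁ |>.2 hne₁) (List.toFinset_nonempty_iff l₂ |>.2 hne₂)
    (fun a ha b hb => hsep a (List.mem_toFinset.1 ha) b (List.mem_toFinset.1 hb))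
  exact ⟨p₁, List.mem_toFinset.1 hp₁, p₂, List.mem_toFinset.1 hp₂,
    fun q hq => hbridge q (by simpa using hq)⟩

theorem bridge_exists (l₁ l₂ : List (ℝ × ℝ)) (h₁ : IsNWChain l₁) (h₂ : IsNWChain l₂)
    (hne₁ : l₁ ≠ []) (hne₂ : l₂ ≠ [])
    (hprec : (l₁.getLast hne₁).1 < (l₂.head hne₂).1)
    (htail : (l₁.getLast hne₁).2 < (l₂.getLast hne₂).2) :
    ∃ p₁ ∈ l₁, ∃ p₂ ∈ l₂, ∀ q, (q ∈ l₁ ∨ q ∈ l₂) → cross p₁ p₂ q ≤ 0 :=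
  bridge_exists_general l₁ l₂ h₁ h₂ hne₁ hne₂ hprec
end

section
/- Let C₁ precede C₂ be northwest monotone convex chains with tail(C₁).y < tail(C₂).y, and let (p₁, p₂) be a bridge between them (p₁ ∈ C₁, p₂ ∈ C₂, the line through p₁, p₂ tangent to both chains). Then the concatenation of the portion of C₁ up to p₁, followed by the portion of C₂ from p₂ onward, is again a northwest monotone convex chain. -/
/-!
Edges of the new chain left of `p₁` are edges of `C₁`, those right of `p₂` are edges of `C₂`,
and the bridge edge supports everything by assumption. An edge `uv` of `C₁` before `p₁` supports
`C₁`; it also supports every point right of `p₁` below the bridge line, because `p₁` lies below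
`uv` and `u` below the bridge line, so the two lines cross between `u` and `p₁` and from there on
the bridge line runs below `uv`. Edges of `C₂` are symmetric. Across the bridge, `p₁` is left of
`p₂` because `C₁` precedes `C₂`, and lower because the last point of `C₂` is right of `p₂`, above
the end of `C₁`, and still below the bridge line.
-/

open List

lemma cross_nonpos_of_edge_left_of_bridge {u v s t r : ℝ × ℝ} (huv : u.1 < v.1) (hus : u.1 < s.1)
    (hst : s.1 < t.1) (hsr : s.1 ≤ r.1) (hs : cross u v s ≤ 0) (hu : cross s t u ≤ 0)
    (hr : cross s t r ≤ 0) : cross u v r ≤ 0 := by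
  have key : (s.1 - u.1) * (t.1 - s.1) * cross u v r =
      (v.1 - u.1) * (s.1 - u.1) * cross s t r + (v.1 - u.1) * (r.1 - s.1) * cross s t u +
        (t.1 - s.1) * (r.1 - u.1) * cross u v s := by
    unfold cross; ring
  have hcomb : (s.1 - u.1) * (t.1 - s.1) * cross u v r ≤ 0 := by
    rw [key]
    refine add_nonpos (add_nonpos ?_ ?_) ?_ <;>
      exact mul_nonpos_of_nonneg_of_nonpos (mul_nonneg (by linarith) (by linarith)) ‹_›
  exact nonpos_of_mul_nonpos_right hcomb (mul_pos (by linarith) (by linarith))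

lemma cross_nonpos_of_edge_right_of_bridge {u v s t r : ℝ × ℝ} (huv : u.1 < v.1)
    (hst : s.1 < t.1) (htu : t.1 ≤ u.1) (hrs : r.1 ≤ s.1) (ht : cross u v t ≤ 0)
    (hv : cross s t v ≤ 0) (hr : cross s t r ≤ 0) : cross u v r ≤ 0 := by
  have key : (v.1 - t.1) * (t.1 - s.1) * cross u v r =
      (v.1 - t.1) * (v.1 - u.1) * cross s t r + (v.1 - r.1) * (t.1 - s.1) * cross u v t +
        (t.1 - r.1) * (v.1 - u.1) * cross s t v := by
    unfold cross; ring
  have hcomb : (v.1 - t.1) * (t.1 - s.1) * cross u v r ≤ 0 := by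
    rw [key]
    refine add_nonpos (add_nonpos ?_ ?_) ?_ <;>
      exact mul_nonpos_of_nonneg_of_nonpos (mul_nonneg (by linarith) (by linarith)) ‹_›
  exact nonpos_of_mul_nonpos_right hcomb (mul_pos (by linarith) (by linarith))

lemma snd_lt_snd_of_cross_nonpos {a b q : ℝ × ℝ} (hab : a.1 < b.1) (haq : a.1 < q.1)
    (hq : a.2 < q.2) (h : cross a b q ≤ 0) : a.2 < b.2 := by
  unfold cross at h
  by_contra! hb
  nlinarith [mul_pos (sub_pos.2 hab) (sub_pos.2 hq),
    mul_nonpos_of_nonpos_of_nonneg (sub_nonpos.2 hb) (sub_pos.2 haq).le]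

namespace List

variable {α β : Type*} {R S : α → α → Prop} {l : List α}

theorem IsChain.and (hR : l.IsChain R) (hS : l.IsChain S) : l.IsChain fun a b => R a b ∧ S a b :=
  isChain_iff_getElem.2 fun i hi => ⟨isChain_iff_getElem.1 hR i hi, isChain_iff_getElem.1 hS i hi⟩

variable [Preorder β] {f : α → β} {a : α}

theorem IsChain.pairwise_le_on (h : l.IsChain fun a b => f a < f b) :
    l.Pairwise fun a b => f a ≤ f b :=
  (pairwise_map.1 (isChain_iff_pairwise.1 ((isChain_map f).2 h))).imp le_of_lt

theorem IsChain.head_le_of_mem (h : l.IsChain fun a b => f a < f b) (ha : a ∈ l) :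
    f (l.head (ne_nil_of_mem ha)) ≤ f a :=
  h.pairwise_le_on.rel_head_of_rel_head_head ha le_rfl

theorem IsChain.le_getLast_of_mem (h : l.IsChain fun a b => f a < f b) (ha : a ∈ l) :
    f a ≤ f (l.getLast (ne_nil_of_mem ha)) :=
  h.pairwise_le_on.rel_getLast_of_rel_getLast_getLast ha le_rfl

end List

lemma isNWChain_iff {l : List (ℝ × ℝ)} :
    IsNWChain l ↔ l.IsChain (fun a b => a.1 < b.1) ∧ l.IsChain (fun a b => a.2 < b.2) ∧
      l.IsChain fun u v => ∀ q ∈ l, cross u v q ≤ 0 := by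
  rw [IsNWChain, isChain_iff_getElem (R := fun u v => ∀ q ∈ l, cross u v q ≤ 0)]
  rfl

lemma IsNWChain.isChain_cross_nonpos_prefix {C P : List (ℝ × ℝ)} {p t : ℝ × ℝ} (hC : IsNWChain C)
    (hP : P ++ [p] <+: C) (hpt : p.1 < t.1) (hbr : ∀ q ∈ C, cross p t q ≤ 0) :
    (P ++ [p]).IsChain fun u v => ∀ q, q ∈ C ∨ (p.1 ≤ q.1 ∧ cross p t q ≤ 0) → cross u v q ≤ 0 := by
  obtain ⟨hx, -, hconv⟩ := isNWChain_iff.1 hC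
  have hle : ∀ v ∈ P ++ [p], v.1 ≤ p.1 := fun v hv => by
    simpa using (hx.prefix hP).le_getLast_of_mem hv
  refine (IsChain.iff_mem.1 ((hx.prefix hP).and (hconv.prefix hP))).imp ?_
  rintro u v ⟨hu, hv, huv, hedge⟩ q (hq | ⟨hpq, hq⟩)
  · exact hedge q hq
  · exact cross_nonpos_of_edge_left_of_bridge huv (huv.trans_le (hle v hv)) hpt hpq
      (hedge p (hP.subset (by simp))) (hbr u (hP.subset hu)) hq

lemma IsNWChain.isChain_cross_nonpos_suffix {C S : List (ℝ × ℝ)} {s p : ℝ × ℝ} (hC : IsNWChain C)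
    (hS : p :: S <:+ C) (hsp : s.1 < p.1) (hbr : ∀ q ∈ C, cross s p q ≤ 0) :
    (p :: S).IsChain fun u v => ∀ q, q ∈ C ∨ (q.1 ≤ s.1 ∧ cross s p q ≤ 0) → cross u v q ≤ 0 := by
  obtain ⟨hx, -, hconv⟩ := isNWChain_iff.1 hC
  have hle : ∀ u ∈ p :: S, p.1 ≤ u.1 := fun u hu => (hx.suffix hS).head_le_of_mem hu
  refine (IsChain.iff_mem.1 ((hx.suffix hS).and (hconv.suffix hS))).imp ?_
  rintro u v ⟨hu, hv, huv, hedge⟩ q (hq | ⟨hqs, hq⟩)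
  · exact hedge q hq
  · exact cross_nonpos_of_edge_right_of_bridge huv hsp (hle u hu) hqs
      (hedge p (hS.subset (by simp))) (hbr v (hS.subset hv)) hq

lemma IsNWChain.append_of_bridge {C₁ C₂ P S : List (ℝ × ℝ)} {p₁ p₂ : ℝ × ℝ}
    (h₁ : IsNWChain C₁) (h₂ : IsNWChain C₂) (hP : P ++ [p₁] <+: C₁) (hS : p₂ :: S <:+ C₂)
    (hx : p₁.1 < p₂.1) (hy : p₁.2 < p₂.2)
    (hbr : ∀ q, (q ∈ C₁ ∨ q ∈ C₂) → cross p₁ p₂ q ≤ 0) :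
    IsNWChain (P ++ p₁ :: p₂ :: S) := by
  have hleft := h₁.isChain_cross_nonpos_prefix hP hx fun q hq => hbr q (.inl hq)
  have hright := h₂.isChain_cross_nonpos_suffix hS hx fun q hq => hbr q (.inr hq)
  obtain ⟨hx₁, hy₁, -⟩ := isNWChain_iff.1 h₁
  obtain ⟨hx₂, hy₂, -⟩ := isNWChain_iff.1 h₂
  rw [isNWChain_iff, show P ++ p₁ :: p₂ :: S = (P ++ [p₁]) ++ p₂ :: S by simp]
  have hmem : ∀ q ∈ (P ++ [p₁]) ++ p₂ :: S,
      (q ∈ C₁ ∧ q.1 ≤ p₁.1) ∨ (q ∈ C₂ ∧ p₂.1 ≤ q.1) := by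
    intro q hq
    rcases mem_append.1 hq with hq | hq
    · exact .inl ⟨hP.subset hq, by simpa using (hx₁.prefix hP).le_getLast_of_mem hq⟩
    · exact .inr ⟨hS.subset hq, (hx₂.suffix hS).head_le_of_mem hq⟩
  have hleft' := hleft.imp fun _ _ h q (hq : q ∈ (P ++ [p₁]) ++ p₂ :: S) => h q <| by
    rcases hmem q hq with ⟨hq₁, -⟩ | ⟨hq₂, hq⟩
    exacts [.inl hq₁, .inr ⟨hx.le.trans hq, hbr q (.inr hq₂)⟩]
  have hright' := hright.imp fun _ _ h q (hq : q ∈ (P ++ [p₁]) ++ p₂ :: S) => h q <| by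
    rcases hmem q hq with ⟨hq₁, hq⟩ | ⟨hq₂, -⟩
    exacts [.inr ⟨hq, hbr q (.inl hq₁)⟩, .inl hq₂]
  refine ⟨(hx₁.prefix hP).append (hx₂.suffix hS) (by simpa using hx),
    (hy₁.prefix hP).append (hy₂.suffix hS) (by simpa using hy), hleft'.append hright' ?_⟩
  simp only [getLast?_concat, head?_cons, Option.mem_some_iff]
  rintro _ rfl _ rfl q hq
  exact hbr q ((hmem q hq).imp And.left And.left)

theorem bridge_concat_is_chain (a b c d : List (ℝ × ℝ)) (p₁ p₂ : ℝ × ℝ)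
    (h₁ : IsNWChain (a ++ p₁ :: b)) (h₂ : IsNWChain (c ++ p₂ :: d))
    (hprec : ((a ++ p₁ :: b).getLast (by simp)).1 < ((c ++ p₂ :: d).head (by simp)).1)
    (htail : ((a ++ p₁ :: b).getLast (by simp)).2 < ((c ++ p₂ :: d).getLast (by simp)).2)
    (hbridge : ∀ q, (q ∈ a ++ p₁ :: b ∨ q ∈ c ++ p₂ :: d) → cross p₁ p₂ q ≤ 0) :
    IsNWChain (a ++ p₁ :: p₂ :: d) := by
  have hp₁ : p₁ ∈ a ++ p₁ :: b := by simp
  have hp₂ : p₂ ∈ c ++ p₂ :: d := by simp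
  obtain ⟨hx₁, hy₁, -⟩ := isNWChain_iff.1 h₁
  obtain ⟨hx₂, -, -⟩ := isNWChain_iff.1 h₂
  have hx : p₁.1 < p₂.1 :=
    calc p₁.1 ≤ ((a ++ p₁ :: b).getLast (by simp)).1 := hx₁.le_getLast_of_mem hp₁
      _ < ((c ++ p₂ :: d).head (by simp)).1 := hprec
      _ ≤ p₂.1 := hx₂.head_le_of_mem hp₂
  have hy : p₁.2 < p₂.2 :=
    snd_lt_snd_of_cross_nonpos hx (hx.trans_le (hx₂.le_getLast_of_mem hp₂))
      ((hy₁.le_getLast_of_mem hp₁).trans_lt htail) (hbridge _ (.inr (getLast_mem _)))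
  exact h₁.append_of_bridge h₂ ⟨b, by simp⟩ (suffix_append c _) hx hy hbridge
end

section
/- The bridge between two northwest monotone convex chains is unique: if C₁ precedes C₂, tail(C₁).y < tail(C₂).y, all slopes in each chain are strictly decreasing, and (p₁,p₂) and (q₁,q₂) are both bridges, then p₁ = q₁ and p₂ = q₂. -/
/- The slope of the segment from `a` to `b` (assuming `a.1 < b.1`). -/
noncomputable def slope2 (a b : ℝ × ℝ) : ℝ := (b.2 - a.2) / (b.1 - a.1)

/- Each of two bridges `(a, b)` and `(c, d)` keeps the endpoints of the other weakly below its
line, and both left endpoints lie left of both right endpoints. If line `ab` were steeper than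
line `cd`, then `c` would lie strictly above `ab` or `b` strictly above `cd`; if it were less
steep, `d` above `ab` or `a` above `cd`. So the two lines coincide, and by general position the
bridges coincide too. -/

theorem List.IsChain.rel_of_mem_of_mem_append {α : Type*} {R : α → α → Prop} [IsTrans α R]
    {l₁ l₂ : List α} (h₁ : l₁.IsChain R) (h₂ : l₂.IsChain R) (hne₁ : l₁ ≠ []) (hne₂ : l₂ ≠ [])
    (h : R (l₁.getLast hne₁) (l₂.head hne₂)) {a b : α} (ha : a ∈ l₁) (hb : b ∈ l₂) : R a b := by
  have hchain : (l₁ ++ l₂).IsChain R :=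
    h₁.append h₂ (by simpa [List.getLast?_eq_some_getLast hne₁, List.head?_eq_some_head hne₂])
  exact (List.pairwise_append.1 (List.isChain_iff_pairwise.1 hchain)).2.2 a ha b hb

theorem cross_eq_zero_of_mutually_supporting {a b c d : ℝ × ℝ} (hab : a.1 < b.1)
    (had : a.1 < d.1) (hcb : c.1 < b.1) (hcd : c.1 < d.1)
    (hc : cross a b c ≤ 0) (hd : cross a b d ≤ 0) (ha : cross c d a ≤ 0) (hb : cross c d b ≤ 0) :
    cross a b c = 0 ∧ cross a b d = 0 := by
  -- `K` is the difference of the slopes of `ab` and `cd`, scaled by both widths.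
  set K := (b.2 - a.2) * (d.1 - c.1) - (d.2 - c.2) * (b.1 - a.1) with hK
  have hleft : K * (d.1 - a.1) = -cross a b d * (d.1 - c.1) - cross c d a * (b.1 - a.1) := by
    simp only [hK, cross]; ring
  have hright : K * (b.1 - c.1) = cross c d b * (b.1 - a.1) + cross a b c * (d.1 - c.1) := by
    simp only [hK, cross]; ring
  have hK_nonneg : 0 ≤ K :=
    nonneg_of_mul_nonneg_left (by rw [hleft]; nlinarith) (sub_pos.2 had)
  have hK_nonpos : K ≤ 0 :=
    nonpos_of_mul_nonpos_left (by rw [hright]; nlinarith) (sub_pos.2 hcb)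
  have hK0 : K = 0 := le_antisymm hK_nonpos hK_nonneg
  rw [hK0, zero_mul] at hleft hright
  constructor <;> nlinarith

theorem bridge_unique (l₁ l₂ : List (ℝ × ℝ)) (h₁ : IsNWChain l₁) (h₂ : IsNWChain l₂)
    (hne₁ : l₁ ≠ []) (hne₂ : l₂ ≠ [])
    (hprec : (l₁.getLast hne₁).1 < (l₂.head hne₂).1)
    (hgp : ∀ a ∈ l₁ ++ l₂, ∀ b ∈ l₁ ++ l₂, ∀ c ∈ l₁ ++ l₂,
      a ≠ b → a ≠ c → b ≠ c → cross a b c ≠ 0)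
    (p₁ q₁ p₂ q₂ : ℝ × ℝ)
    (hp₁ : p₁ ∈ l₁) (hq₁ : q₁ ∈ l₁) (hp₂ : p₂ ∈ l₂) (hq₂ : q₂ ∈ l₂)
    (hbp : ∀ r ∈ l₁ ++ l₂, cross p₁ p₂ r ≤ 0)
    (hbq : ∀ r ∈ l₁ ++ l₂, cross q₁ q₂ r ≤ 0) :
    p₁ = q₁ ∧ p₂ = q₂ := by
  have hsep : ∀ {a b}, a ∈ l₁ → b ∈ l₂ → a.1 < b.1 := fun ha hb =>
    haveI : IsTrans (ℝ × ℝ) (fun a b => a.1 < b.1) := ⟨fun _ _ _ => lt_trans⟩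
    List.IsChain.rel_of_mem_of_mem_append h₁.1 h₂.1 hne₁ hne₂ hprec ha hb
  have hne : ∀ {a b}, a ∈ l₁ → b ∈ l₂ → a ≠ b := fun ha hb =>
    ne_of_apply_ne Prod.fst (hsep ha hb).ne
  have hmem₁ : ∀ {a}, a ∈ l₁ → a ∈ l₁ ++ l₂ := List.mem_append_left l₂
  have hmem₂ : ∀ {b}, b ∈ l₂ → b ∈ l₁ ++ l₂ := List.mem_append_right l₁
  obtain ⟨hq₁_on, hq₂_on⟩ := cross_eq_zero_of_mutually_supporting
    (hsep hp₁ hp₂) (hsep hp₁ hq₂) (hsep hq₁ hp₂) (hsep hq₁ hq₂)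
    (hbp q₁ (hmem₁ hq₁)) (hbp q₂ (hmem₂ hq₂)) (hbq p₁ (hmem₁ hp₁)) (hbq p₂ (hmem₂ hp₂))
  constructor
  · by_contra h
    exact hgp p₁ (hmem₁ hp₁) p₂ (hmem₂ hp₂) q₁ (hmem₁ hq₁)
      (hne hp₁ hp₂) h (hne hq₁ hp₂).symm hq₁_on
  · by_contra h
    exact hgp p₁ (hmem₁ hp₁) p₂ (hmem₂ hp₂) q₂ (hmem₂ hq₂)
      (hne hp₁ hp₂) (hne hp₁ hq₂) h hq₂_on
end

section
/- Domination by full chains is transitive on points: if a full northwest monotone convex chain C dominates every point of a full chain C′, and C′ dominates a point p, then C dominates p. -/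
/- Domination by the full chain (the chain augmented with the sentinels `(head.x, -∞)` and
`(+∞, tail.y)`): `p` is strictly below the vertical sentinel edge at `head.x`, strictly
below the horizontal sentinel ray at height `tail.y`, or strictly below an ordinary edge
whose x-range contains `p.x`. -/
def Dominates (l : List (ℝ × ℝ)) (p : ℝ × ℝ) : Prop :=
  (p.1 = l.head!.1 ∧ p.2 < l.head!.2) ∨
  (l.getLast!.1 ≤ p.1 ∧ p.2 < l.getLast!.2) ∨
  ∃ i, i + 1 < l.length ∧ l[i]!.1 ≤ p.1 ∧ p.1 ≤ l[i+1]!.1 ∧ cross l[i]! l[i+1]! p < 0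

/- `H` is the northwest hull chain of the finite point set `P`: a nonempty northwest
monotone convex chain of points of `P` dominating every other point of `P`. -/
def IsNWHullChain (P : Finset (ℝ × ℝ)) (H : List (ℝ × ℝ)) : Prop :=
  H ≠ [] ∧ (∀ p ∈ H, p ∈ P) ∧ IsNWChain H ∧ ∀ p ∈ P, p ∉ H → Dominates H p

-- ## auxiliary lemmas

lemma cross_below_seg (A B a b p : ℝ × ℝ) (hAB : A.1 < B.1) (hab : a.1 < b.1)
    (h1 : a.1 ≤ p.1) (h2 : p.1 ≤ b.1) (hca : cross A B a ≤ 0) (hcb : cross A B b ≤ 0)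
    (hp : cross a b p < 0) : cross A B p < 0 := by
  have key : (b.1 - a.1) * cross A B p
      = (b.1 - p.1) * cross A B a + (p.1 - a.1) * cross A B b + (B.1 - A.1) * cross a b p := by
    simp only [cross]; ring
  nlinarith [mul_nonneg (sub_nonneg.mpr h2) (neg_nonneg.mpr hca),
    mul_nonneg (sub_nonneg.mpr h1) (neg_nonneg.mpr hcb),
    mul_pos (sub_pos.mpr hAB) (neg_pos.mpr hp), sub_pos.mpr hab]

lemma below_seg_max (a b p : ℝ × ℝ) (hab : a.1 < b.1) (h1 : a.1 ≤ p.1) (h2 : p.1 ≤ b.1)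
    (hp : cross a b p < 0) (M : ℝ) (ha : a.2 < M) (hb : b.2 < M) : p.2 < M := by
  have key : (b.1 - a.1) * (M - p.2)
      = (b.1 - p.1) * (M - a.2) + (p.1 - a.1) * (M - b.2) - cross a b p := by
    simp only [cross]; ring
  nlinarith [mul_nonneg (sub_nonneg.mpr h2) (sub_pos.mpr ha).le,
    mul_nonneg (sub_nonneg.mpr h1) (sub_pos.mpr hb).le, sub_pos.mpr hab]

lemma nw_x_lt {l : List (ℝ × ℝ)} (hl : IsNWChain l) {i j : ℕ}
    (hj : j < l.length) (hij : i < j) : (l[i]'(hij.trans hj)).1 < (l[j]'hj).1 := by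
  haveI : IsTrans (ℝ × ℝ) (fun a b => a.1 < b.1) := ⟨fun a b c h1 h2 => h1.trans h2⟩
  exact List.pairwise_iff_getElem.mp (List.isChain_iff_pairwise.mp hl.1) i j (hij.trans hj) hj hij

lemma nw_y_lt {l : List (ℝ × ℝ)} (hl : IsNWChain l) {i j : ℕ}
    (hj : j < l.length) (hij : i < j) : (l[i]'(hij.trans hj)).2 < (l[j]'hj).2 := by
  haveI : IsTrans (ℝ × ℝ) (fun a b => a.2 < b.2) := ⟨fun a b c h1 h2 => h1.trans h2⟩
  exact List.pairwise_iff_getElem.mp (List.isChain_iff_pairwise.mp hl.2.1) i j (hij.trans hj) hj hij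

lemma nw_x_le {l : List (ℝ × ℝ)} (hl : IsNWChain l) {i j : ℕ}
    (hj : j < l.length) (hij : i ≤ j) : (l[i]'(Nat.lt_of_le_of_lt hij hj)).1 ≤ (l[j]'hj).1 := by
  rcases hij.lt_or_eq with h | h
  · exact (nw_x_lt hl hj h).le
  · subst h; rfl

lemma nw_y_le {l : List (ℝ × ℝ)} (hl : IsNWChain l) {i j : ℕ}
    (hj : j < l.length) (hij : i ≤ j) : (l[i]'(Nat.lt_of_le_of_lt hij hj)).2 ≤ (l[j]'hj).2 := by
  rcases hij.lt_or_eq with h | h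
  · exact (nw_y_lt hl hj h).le
  · subst h; rfl

lemma head!_eq {l : List (ℝ × ℝ)} (hne : l ≠ []) :
    l.head! = l[0]'(List.length_pos_iff.mpr hne) := by
  cases l with
  | nil => exact absurd rfl hne
  | cons a t => rfl

lemma getLast!_eq {l : List (ℝ × ℝ)} (hne : l ≠ []) :
    l.getLast! = l[l.length - 1]'(Nat.sub_lt (List.length_pos_iff.mpr hne) one_pos) := by
  rw [List.getLast!_eq_getElem!, getElem!_pos]

lemma head!_mem {l : List (ℝ × ℝ)} (hne : l ≠ []) : l.head! ∈ l := by
  rw [head!_eq hne]; exact List.getElem_mem _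

lemma getLast!_mem {l : List (ℝ × ℝ)} (hne : l ≠ []) : l.getLast! ∈ l := by
  rw [getLast!_eq hne]; exact List.getElem_mem _

lemma dom_lb {l : List (ℝ × ℝ)} (hl : IsNWChain l) (hne : l ≠ []) {a : ℝ × ℝ}
    (hd : Dominates l a) : (l[0]'(List.length_pos_iff.mpr hne)).1 ≤ a.1 := by
  have h0 : 0 < l.length := List.length_pos_iff.mpr hne
  rcases hd with ⟨he, _⟩ | ⟨he, _⟩ | ⟨j, hj, hja, _, _⟩
  · rw [head!_eq hne] at he; exact he.ge
  · rw [getLast!_eq hne] at he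
    exact le_trans (nw_x_le hl (Nat.sub_lt h0 one_pos) (by omega)) he
  · rw [getElem!_pos l j (by omega)] at hja
    exact le_trans (nw_x_le hl (by omega) (Nat.zero_le j)) hja

lemma below_edge_ub (a b p : ℝ × ℝ) (hab : a.1 < b.1) (hab2 : a.2 < b.2)
    (h2 : p.1 ≤ b.1) (hp : cross a b p < 0) : p.2 < b.2 := by
  simp only [cross] at hp
  nlinarith [sub_pos.mpr hab, sub_pos.mpr hab2]

lemma dom_ub {l : List (ℝ × ℝ)} (hl : IsNWChain l) (hne : l ≠ []) {a : ℝ × ℝ}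
    (hd : Dominates l a) :
    a.2 < (l[l.length - 1]'(Nat.sub_lt (List.length_pos_iff.mpr hne) one_pos)).2 := by
  have h0 : 0 < l.length := List.length_pos_iff.mpr hne
  rcases hd with ⟨_, he⟩ | ⟨_, he⟩ | ⟨j, hj, _, hja, hc⟩
  · rw [head!_eq hne] at he
    exact lt_of_lt_of_le he (nw_y_le hl (Nat.sub_lt h0 one_pos) (by omega))
  · rw [getLast!_eq hne] at he; exact he
  · rw [getElem!_pos l (j+1) hj] at hja
    rw [getElem!_pos l j (by omega), getElem!_pos l (j+1) hj] at hc
    have := below_edge_ub _ _ a (nw_x_lt hl hj (by omega)) (nw_y_lt hl hj (by omega)) hja hc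
    exact lt_of_lt_of_le this (nw_y_le hl (Nat.sub_lt h0 one_pos) (by omega))

lemma dom_cross {l : List (ℝ × ℝ)} (hl : IsNWChain l) (hne : l ≠ []) {a : ℝ × ℝ}
    (hd : Dominates l a) : ∀ i, (h : i + 1 < l.length) →
      cross (l[i]'(Nat.lt_of_succ_lt h)) (l[i+1]'h) a < 0 := by
  intro i h
  have h0 : 0 < l.length := List.length_pos_iff.mpr hne
  have hAB1 : (l[i]'(Nat.lt_of_succ_lt h)).1 < (l[i+1]'h).1 := nw_x_lt hl h (by omega)
  have hAB2 : (l[i]'(Nat.lt_of_succ_lt h)).2 < (l[i+1]'h).2 := nw_y_lt hl h (by omega)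
  rcases hd with ⟨he1, he2⟩ | ⟨he1, he2⟩ | ⟨j, hj, hja, haj, hc⟩
  · rw [head!_eq hne] at he1 he2
    have h0c : cross (l[i]'(Nat.lt_of_succ_lt h)) (l[i+1]'h) (l[0]'h0) ≤ 0 :=
      hl.2.2 i h _ (List.getElem_mem _)
    simp only [cross] at h0c ⊢
    nlinarith [mul_pos (sub_pos.mpr hAB1) (sub_pos.mpr he2)]
  · rw [getLast!_eq hne] at he1 he2
    have hLc : cross (l[i]'(Nat.lt_of_succ_lt h)) (l[i+1]'h)
        (l[l.length-1]'(Nat.sub_lt h0 one_pos)) ≤ 0 := hl.2.2 i h _ (List.getElem_mem _)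
    have hx1 : (l[i+1]'h).1 ≤ (l[l.length-1]'(Nat.sub_lt h0 one_pos)).1 :=
      nw_x_le hl _ (by omega)
    simp only [cross] at hLc ⊢
    nlinarith [mul_pos (sub_pos.mpr hAB1) (sub_pos.mpr he2),
      mul_nonneg (sub_pos.mpr hAB2).le (sub_nonneg.mpr he1)]
  · rw [getElem!_pos l j (by omega)] at hja
    rw [getElem!_pos l (j+1) hj] at haj
    rw [getElem!_pos l j (by omega), getElem!_pos l (j+1) hj] at hc
    exact cross_below_seg _ _ _ _ _ hAB1 (nw_x_lt hl hj (by omega)) hja haj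
      (hl.2.2 i h _ (List.getElem_mem _)) (hl.2.2 i h _ (List.getElem_mem _)) hc

lemma find_edge (l : List (ℝ × ℝ)) (x : ℝ) (h0 : 0 < l.length)
    (hlb : (l[0]'h0).1 ≤ x) (hub : x < (l[l.length-1]'(Nat.sub_lt h0 one_pos)).1) :
    ∃ j, j + 1 < l.length ∧ l[j]!.1 ≤ x ∧ x ≤ l[j+1]!.1 := by
  have H : ∀ n i, (hi : i < l.length) → l.length - i ≤ n → l[i]!.1 ≤ x →
      ∃ j, j + 1 < l.length ∧ l[j]!.1 ≤ x ∧ x ≤ l[j+1]!.1 := by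
    intro n
    induction n with
    | zero => intro i hi hni _; omega
    | succ n ih =>
      intro i hi hni hix
      have hine : i ≠ l.length - 1 := by
        intro hh
        rw [getElem!_pos l i hi] at hix
        subst hh
        exact absurd hub (not_lt.mpr hix)
      have hi1 : i + 1 < l.length := by omega
      by_cases hc : x ≤ l[i+1]!.1
      · exact ⟨i, hi1, hix, hc⟩
      · exact ih (i+1) hi1 (by omega) (le_of_lt (not_le.mp hc))
  exact H l.length 0 h0 (by omega) (by rw [getElem!_pos l 0 h0]; exact hlb)

lemma dominates_of_cross {l : List (ℝ × ℝ)} (hl : IsNWChain l) (hne : l ≠ []) (p : ℝ × ℝ)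
    (h1 : (l[0]'(List.length_pos_iff.mpr hne)).1 ≤ p.1)
    (h2 : p.2 < (l[l.length-1]'(Nat.sub_lt (List.length_pos_iff.mpr hne) one_pos)).2)
    (h3 : ∀ i, (h : i + 1 < l.length) →
      cross (l[i]'(Nat.lt_of_succ_lt h)) (l[i+1]'h) p < 0) : Dominates l p := by
  have h0 : 0 < l.length := List.length_pos_iff.mpr hne
  by_cases hc : (l[l.length-1]'(Nat.sub_lt h0 one_pos)).1 ≤ p.1
  · refine Or.inr (Or.inl ⟨?_, ?_⟩) <;> rw [getLast!_eq hne]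
    · exact hc
    · exact h2
  · obtain ⟨j, hj, hja, haj⟩ := find_edge l p.1 h0 h1 (not_le.mp hc)
    refine Or.inr (Or.inr ⟨j, hj, hja, haj, ?_⟩)
    rw [getElem!_pos l j (by omega), getElem!_pos l (j+1) hj]
    exact h3 j hj


/- STATEMENT 11: domination is transitive: if the full chain `l` dominates every point of
the full chain `l'`, and `l'` dominates `p`, then `l` dominates `p`. -/
theorem dominates_trans (l l' : List (ℝ × ℝ)) (hl : IsNWChain l) (hl' : IsNWChain l')
    (hne : l ≠ []) (hne' : l' ≠ [])
    (hdom : ∀ q ∈ l', Dominates l q) (p : ℝ × ℝ) (hp : Dominates l' p) :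
    Dominates l p := by
  have h0 : 0 < l.length := List.length_pos_iff.mpr hne
  rcases hp with ⟨he1, he2⟩ | ⟨he1, he2⟩ | ⟨j, hj, hja, haj, hc⟩
  · -- below the vertical sentinel of l'
    set q := l'.head! with hq
    have hdq : Dominates l q := hdom q (head!_mem hne')
    refine dominates_of_cross hl hne p (he1 ▸ dom_lb hl hne hdq) (he2.trans (dom_ub hl hne hdq)) ?_
    intro i h
    have hcq := dom_cross hl hne hdq i h
    have hAB1 : (l[i]'(Nat.lt_of_succ_lt h)).1 < (l[i+1]'h).1 := nw_x_lt hl h (by omega)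
    simp only [cross] at hcq ⊢
    rw [he1]
    nlinarith [mul_pos (sub_pos.mpr hAB1) (sub_pos.mpr he2)]
  · -- below the horizontal sentinel of l'
    set q := l'.getLast! with hq
    have hdq : Dominates l q := hdom q (getLast!_mem hne')
    refine dominates_of_cross hl hne p ((dom_lb hl hne hdq).trans he1)
      (he2.trans (dom_ub hl hne hdq)) ?_
    intro i h
    have hcq := dom_cross hl hne hdq i h
    have hAB1 : (l[i]'(Nat.lt_of_succ_lt h)).1 < (l[i+1]'h).1 := nw_x_lt hl h (by omega)
    have hAB2 : (l[i]'(Nat.lt_of_succ_lt h)).2 < (l[i+1]'h).2 := nw_y_lt hl h (by omega)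
    simp only [cross] at hcq ⊢
    nlinarith [mul_pos (sub_pos.mpr hAB1) (sub_pos.mpr he2),
      mul_nonneg (sub_pos.mpr hAB2).le (sub_nonneg.mpr he1)]
  · -- below an ordinary edge of l'
    have hj' : j < l'.length := by omega
    rw [getElem!_pos l' j hj'] at hja
    rw [getElem!_pos l' (j+1) hj] at haj
    rw [getElem!_pos l' j hj', getElem!_pos l' (j+1) hj] at hc
    set a := l'[j]'hj' with ha
    set b := l'[j+1]'hj with hb
    have hda : Dominates l a := hdom a (List.getElem_mem _)
    have hdb : Dominates l b := hdom b (List.getElem_mem _)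
    have hab : a.1 < b.1 := nw_x_lt hl' hj (by omega)
    refine dominates_of_cross hl hne p ((dom_lb hl hne hda).trans hja)
      (below_seg_max a b p hab hja haj hc _ (dom_ub hl hne hda) (dom_ub hl hne hdb)) ?_
    intro i h
    exact cross_below_seg _ _ a b p (nw_x_lt hl h (by omega)) hab hja haj
      (dom_cross hl hne hda i h).le (dom_cross hl hne hdb i h).le hc
end

section
/- For a finite set P of points in the plane with distinct x- and y-coordinates, there is a unique northwest hull chain of P: a subset H ⊆ P that forms a northwest monotone convex chain dominating every point of P \ H. -/
theorem cross_self_left (a b : ℝ × ℝ) : cross a b a = 0 := by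
  unfold cross; ring

theorem cross_self_right (a b : ℝ × ℝ) : cross a b b = 0 := by
  unfold cross; ring

theorem cross_horizontal (w q : ℝ × ℝ) : cross w (w.1 + 1, w.2) q = q.2 - w.2 := by
  unfold cross; ring

theorem cross_lt_of_southeast {u v a q : ℝ × ℝ} (huv : u.1 < v.1) (huv' : u.2 ≤ v.2)
    (haq : a.1 ≤ q.1) (hqa : q.2 < a.2) : cross u v q < cross u v a := by
  have h : cross u v q - cross u v a = (v.1 - u.1) * (q.2 - a.2) - (v.2 - u.2) * (q.1 - a.1) := by
    unfold cross; ring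
  nlinarith [mul_pos (sub_pos.2 huv) (sub_pos.2 hqa),
    mul_nonneg (sub_nonneg.2 huv') (sub_nonneg.2 haq)]

/-- Since `cross u v` is affine, its value at `q` is the interpolation of its values at `c` and `d`
plus a positive multiple of `cross c d q`. -/
theorem cross_neg_of_below_chord {u v c d q : ℝ × ℝ} (huv : u.1 < v.1) (hcq : c.1 ≤ q.1)
    (hqd : q.1 ≤ d.1) (hc : cross u v c ≤ 0) (hd : cross u v d ≤ 0) (hq : cross c d q < 0) :
    cross u v q < 0 := by
  have key : (d.1 - c.1) * cross u v q =
      (d.1 - q.1) * cross u v c + (q.1 - c.1) * cross u v d + (v.1 - u.1) * cross c d q := by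
    unfold cross; ring
  have hneg : (d.1 - c.1) * cross u v q < 0 := by
    rw [key]
    nlinarith [mul_nonpos_of_nonneg_of_nonpos (sub_nonneg.2 hqd) hc,
      mul_nonpos_of_nonneg_of_nonpos (sub_nonneg.2 hcq) hd,
      mul_neg_of_pos_of_neg (sub_pos.2 huv) hq]
  exact neg_of_mul_neg_right hneg (by linarith)

theorem List.exists_getElem_le_le {α β : Type*} [LinearOrder β] (f : α → β) :
    ∀ {l : List α} (hl : l ≠ []) {x : β}, f (l.head hl) ≤ x → x < f (l.getLast hl) →
      ∃ i, ∃ hi : i + 1 < l.length, f l[i] ≤ x ∧ x ≤ f l[i + 1]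
  | [_], _, _, h₁, h₂ => absurd h₂ (not_lt.2 h₁)
  | a :: b :: l, _, x, h₁, h₂ => by
    by_cases hb : x ≤ f b
    · exact ⟨0, by simp, h₁, hb⟩
    · obtain ⟨i, hi, h⟩ := exists_getElem_le_le f (l := b :: l) (List.cons_ne_nil _ _)
        (le_of_not_ge hb) (by simpa using h₂)
      exact ⟨i + 1, by simpa using hi, by simpa using h⟩

theorem dominates_iff_of_ne_nil {l : List (ℝ × ℝ)} (hl : l ≠ []) {p : ℝ × ℝ} :
    Dominates l p ↔ (p.1 = (l.head hl).1 ∧ p.2 < (l.head hl).2) ∨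
      ((l.getLast hl).1 ≤ p.1 ∧ p.2 < (l.getLast hl).2) ∨
      ∃ i, ∃ hi : i + 1 < l.length,
        l[i].1 ≤ p.1 ∧ p.1 ≤ l[i + 1].1 ∧ cross l[i] l[i + 1] p < 0 := by
  have hhead : l.head! = l.head hl := by
    simp [List.head!_eq_head?_getD, List.head?_eq_some_head hl]
  have hlast : l.getLast! = l.getLast hl := by
    simp [List.getLast!_eq_getLast?_getD, List.getLast?_eq_some_getLast hl]
  unfold Dominates
  rw [hhead, hlast]
  refine or_congr_right (or_congr_right (exists_congr fun i => ⟨fun ⟨hi, h⟩ => ⟨hi, ?_⟩,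
    fun ⟨hi, h⟩ => ⟨hi, ?_⟩⟩))
  · rwa [getElem!_pos l i (by omega), getElem!_pos l (i + 1) hi] at h
  · rwa [getElem!_pos l i (by omega), getElem!_pos l (i + 1) hi]

theorem dominates_of_forall_cross_neg {l : List (ℝ × ℝ)} (hl : l ≠ []) {q : ℝ × ℝ}
    (h₁ : (l.head hl).1 ≤ q.1) (h₂ : q.2 < (l.getLast hl).2)
    (h₃ : ∀ i, ∀ hi : i + 1 < l.length, cross l[i] l[i + 1] q < 0) : Dominates l q := by
  rw [dominates_iff_of_ne_nil hl]
  by_cases hq : (l.getLast hl).1 ≤ q.1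
  · exact Or.inr (Or.inl ⟨hq, h₂⟩)
  obtain ⟨i, hi, hi₁, hi₂⟩ := List.exists_getElem_le_le Prod.fst hl h₁ (not_le.1 hq)
  exact Or.inr (Or.inr ⟨i, hi, hi₁, hi₂, h₃ i hi⟩)

namespace IsNWChain

variable {l : List (ℝ × ℝ)}

theorem pairwise_fst (h : IsNWChain l) : l.Pairwise (fun a b => a.1 < b.1) :=
  @List.IsChain.pairwise _ _ _ ⟨lt_trans⟩ h.1

theorem pairwise_snd (h : IsNWChain l) : l.Pairwise (fun a b => a.2 < b.2) :=
  @List.IsChain.pairwise _ _ _ ⟨lt_trans⟩ h.2.1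

theorem fst_lt (h : IsNWChain l) {i : ℕ} (hi : i + 1 < l.length) : l[i].1 < l[i + 1].1 :=
  h.1.getElem i hi

theorem snd_lt (h : IsNWChain l) {i : ℕ} (hi : i + 1 < l.length) : l[i].2 < l[i + 1].2 :=
  h.2.1.getElem i hi

theorem head_fst_le (h : IsNWChain l) {q : ℝ × ℝ} (hq : q ∈ l) :
    (l.head (List.ne_nil_of_mem hq)).1 ≤ q.1 :=
  (h.pairwise_fst.imp le_of_lt).rel_head_of_rel_head_head hq le_rfl

theorem snd_le_getLast_snd (h : IsNWChain l) {q : ℝ × ℝ} (hq : q ∈ l) :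
    q.2 ≤ (l.getLast (List.ne_nil_of_mem hq)).2 :=
  (h.pairwise_snd.imp le_of_lt).rel_getLast_of_rel_getLast_getLast hq le_rfl

end IsNWChain

def IsShadowed (P : Finset (ℝ × ℝ)) (b : ℝ × ℝ) : Prop :=
  (∃ a ∈ P, a.1 < b.1 ∧ b.2 < a.2) ∨
    ∃ a ∈ P, ∃ c ∈ P, a.1 < b.1 ∧ b.1 < c.1 ∧ cross a c b < 0

theorem IsShadowed.erase_self {P : Finset (ℝ × ℝ)} {b : ℝ × ℝ} (h : IsShadowed P b) :
    IsShadowed (P.erase b) b := by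
  have hmem : ∀ a : ℝ × ℝ, a.1 ≠ b.1 → a ∈ P → a ∈ P.erase b :=
    fun a hab ha => Finset.mem_erase.2 ⟨fun e => hab (e ▸ rfl), ha⟩
  rcases h with ⟨a, ha, h₁, h₂⟩ | ⟨a, ha, c, hc, h₁, h₂, h₃⟩
  · exact Or.inl ⟨a, hmem a h₁.ne ha, h₁, h₂⟩
  · exact Or.inr ⟨a, hmem a h₁.ne ha, c, hmem c h₂.ne' hc, h₁, h₂, h₃⟩

theorem IsShadowed.nonempty {P : Finset (ℝ × ℝ)} {b : ℝ × ℝ} (h : IsShadowed P b) :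
    P.Nonempty := by
  rcases h with ⟨a, ha, -⟩ | ⟨a, ha, -⟩ <;> exact ⟨a, ha⟩

def HasSupportingLine (P : Finset (ℝ × ℝ)) (p : ℝ × ℝ) : Prop :=
  ∃ v : ℝ × ℝ, p.1 < v.1 ∧ p.2 ≤ v.2 ∧ ∀ q ∈ P, cross p v q ≤ 0

namespace IsNWHullChain

variable {P : Finset (ℝ × ℝ)} {H : List (ℝ × ℝ)}

theorem isNWChain (hH : IsNWHullChain P H) : IsNWChain H := hH.2.2.1

theorem mem_of_mem (hH : IsNWHullChain P H) {p : ℝ × ℝ} (hp : p ∈ H) : p ∈ P := hH.2.1 p hp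

theorem dominates_cases (hH : IsNWHullChain P H) (hx : Set.InjOn Prod.fst (P : Set (ℝ × ℝ)))
    {p : ℝ × ℝ} (hp : p ∈ P) (hpH : p ∉ H) :
    ((H.getLast hH.1).1 ≤ p.1 ∧ p.2 < (H.getLast hH.1).2) ∨
      ∃ i, ∃ hi : i + 1 < H.length,
        H[i].1 ≤ p.1 ∧ p.1 ≤ H[i + 1].1 ∧ cross H[i] H[i + 1] p < 0 := by
  rcases (dominates_iff_of_ne_nil hH.1).1 (hH.2.2.2 p hp hpH) with ⟨h, -⟩ | h | h
  · exact absurd (hx hp (hH.mem_of_mem (List.head_mem hH.1)) h ▸ List.head_mem hH.1) hpH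
  · exact Or.inl h
  · exact Or.inr h

theorem head_fst_le (hH : IsNWHullChain P H) {q : ℝ × ℝ} (hq : q ∈ P) :
    (H.head hH.1).1 ≤ q.1 := by
  by_cases hqH : q ∈ H
  · exact hH.isNWChain.head_fst_le hqH
  rcases (dominates_iff_of_ne_nil hH.1).1 (hH.2.2.2 q hq hqH) with
    ⟨h, -⟩ | ⟨h, -⟩ | ⟨i, hi, h, -⟩
  · exact h.ge
  · exact (hH.isNWChain.head_fst_le (List.getLast_mem hH.1)).trans h
  · exact (hH.isNWChain.head_fst_le (List.getElem_mem _)).trans h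

theorem snd_le_getLast_snd (hH : IsNWHullChain P H) (hx : Set.InjOn Prod.fst (P : Set (ℝ × ℝ)))
    {q : ℝ × ℝ} (hq : q ∈ P) : q.2 ≤ (H.getLast hH.1).2 := by
  by_cases hqH : q ∈ H
  · exact hH.isNWChain.snd_le_getLast_snd hqH
  rcases hH.dominates_cases hx hq hqH with ⟨-, h⟩ | ⟨i, hi, h₁, h₂, h₃⟩
  · exact h.le
  · have hlt : q.2 - H[i + 1].2 < 0 := by
      rw [← cross_horizontal]
      refine cross_neg_of_below_chord (by simp) h₁ h₂ ?_ ?_ h₃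
      · rw [cross_horizontal]; linarith [hH.isNWChain.snd_lt hi]
      · rw [cross_horizontal, sub_self]
    linarith [hH.isNWChain.snd_le_getLast_snd (List.getElem_mem hi)]

theorem cross_nonpos (hH : IsNWHullChain P H) (hx : Set.InjOn Prod.fst (P : Set (ℝ × ℝ))) {i : ℕ}
    (hi : i + 1 < H.length) {q : ℝ × ℝ} (hq : q ∈ P) : cross H[i] H[i + 1] q ≤ 0 := by
  have hc := hH.isNWChain
  by_cases hqH : q ∈ H
  · exact hc.2.2 i hi q hqH
  rcases hH.dominates_cases hx hq hqH with ⟨h₁, h₂⟩ | ⟨j, hj, h₁, h₂, h₃⟩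
  · exact ((cross_lt_of_southeast (hc.fst_lt hi) (hc.snd_lt hi).le h₁ h₂).trans_le
      (hc.2.2 i hi _ (List.getLast_mem hH.1))).le
  · exact (cross_neg_of_below_chord (hc.fst_lt hi) h₁ h₂ (hc.2.2 i hi _ (List.getElem_mem _))
      (hc.2.2 i hi _ (List.getElem_mem _)) h₃).le

theorem dominates_of_isShadowed (hH : IsNWHullChain P H) (hx : Set.InjOn Prod.fst (P : Set (ℝ × ℝ)))
    {b : ℝ × ℝ} (hb : IsShadowed P b) : Dominates H b := by
  have hc := hH.isNWChain
  rcases hb with ⟨a, ha, h₁, h₂⟩ | ⟨a, ha, c, hc', h₁, h₂, h₃⟩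
  · refine dominates_of_forall_cross_neg hH.1 ((hH.head_fst_le ha).trans h₁.le)
      (h₂.trans_le (hH.snd_le_getLast_snd hx ha)) fun i hi => ?_
    exact (cross_lt_of_southeast (hc.fst_lt hi) (hc.snd_lt hi).le h₁.le h₂).trans_le
      (hH.cross_nonpos hx hi ha)
  · refine dominates_of_forall_cross_neg hH.1 ((hH.head_fst_le ha).trans h₁.le) ?_
      fun i hi => cross_neg_of_below_chord (hc.fst_lt hi) h₁.le h₂.le (hH.cross_nonpos hx hi ha)
        (hH.cross_nonpos hx hi hc') h₃
    have hlt : b.2 - (H.getLast hH.1).2 < 0 := by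
      rw [← cross_horizontal]
      refine cross_neg_of_below_chord (by simp) h₁.le h₂.le ?_ ?_ h₃ <;> rw [cross_horizontal]
      · linarith [hH.snd_le_getLast_snd hx ha]
      · linarith [hH.snd_le_getLast_snd hx hc']
    linarith

theorem of_erase {b : ℝ × ℝ} (hH : IsNWHullChain (P.erase b) H) (hdom : Dominates H b) :
    IsNWHullChain P H :=
  ⟨hH.1, fun _ hp => Finset.mem_of_mem_erase (hH.mem_of_mem hp), hH.isNWChain, fun p hp hpH =>
    if hpb : p = b then hpb ▸ hdom else hH.2.2.2 p (Finset.mem_erase.2 ⟨hpb, hp⟩) hpH⟩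

theorem hasSupportingLine (hH : IsNWHullChain P H) (hx : Set.InjOn Prod.fst (P : Set (ℝ × ℝ)))
    {p : ℝ × ℝ} (hp : p ∈ H) : HasSupportingLine P p := by
  obtain ⟨k, hk, rfl⟩ := List.getElem_of_mem hp
  by_cases hk₁ : k + 1 < H.length
  · exact ⟨H[k + 1], hH.isNWChain.fst_lt hk₁, (hH.isNWChain.snd_lt hk₁).le,
      fun q hq => hH.cross_nonpos hx hk₁ hq⟩
  · have hlast : H[k] = H.getLast hH.1 := by
      rw [List.getLast_eq_getElem]; congr; omega
    refine ⟨(H[k].1 + 1, H[k].2), by simp, le_rfl, fun q hq => ?_⟩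
    rw [cross_horizontal, hlast]
    linarith [hH.snd_le_getLast_snd hx hq]

theorem mem_of_hasSupportingLine (hH : IsNWHullChain P H)
    (hx : Set.InjOn Prod.fst (P : Set (ℝ × ℝ)))
    {p : ℝ × ℝ} (hp : p ∈ P) (hsupp : HasSupportingLine P p) : p ∈ H := by
  obtain ⟨v, hv₁, hv₂, hv⟩ := hsupp
  by_contra hpH
  have hneg : cross p v p < 0 := by
    rcases hH.dominates_cases hx hp hpH with ⟨h₁, h₂⟩ | ⟨i, hi, h₁, h₂, h₃⟩
    · exact (cross_lt_of_southeast hv₁ hv₂ h₁ h₂).trans_le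
        (hv _ (hH.mem_of_mem (List.getLast_mem hH.1)))
    · exact cross_neg_of_below_chord hv₁ h₁ h₂ (hv _ (hH.mem_of_mem (List.getElem_mem _)))
        (hv _ (hH.mem_of_mem (List.getElem_mem _))) h₃
  exact (cross_self_left p v).not_lt hneg

theorem mem_iff (hH : IsNWHullChain P H) (hx : Set.InjOn Prod.fst (P : Set (ℝ × ℝ))) {p : ℝ × ℝ} :
    p ∈ H ↔ p ∈ P ∧ HasSupportingLine P p :=
  ⟨fun hp => ⟨hH.mem_of_mem hp, hH.hasSupportingLine hx hp⟩,
    fun ⟨hp, hsupp⟩ => hH.mem_of_hasSupportingLine hx hp hsupp⟩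

theorem unique {H' : List (ℝ × ℝ)} (hH : IsNWHullChain P H) (hH' : IsNWHullChain P H')
    (hx : Set.InjOn Prod.fst (P : Set (ℝ × ℝ))) : H = H' := by
  have : Std.Irrefl (fun a b : ℝ × ℝ => a.1 < b.1) := ⟨fun a => lt_irrefl a.1⟩
  have : Std.Antisymm (fun a b : ℝ × ℝ => a.1 < b.1) :=
    ⟨fun _ _ h h' => absurd (h.trans h') (lt_irrefl _)⟩
  exact hH.isNWChain.pairwise_fst.eq_of_mem_iff hH'.isNWChain.pairwise_fst fun p => by
    rw [hH.mem_iff hx, hH'.mem_iff hx]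

end IsNWHullChain

theorem Finset.exists_list_pairwise_fst_lt (P : Finset (ℝ × ℝ))
    (hx : Set.InjOn Prod.fst (P : Set (ℝ × ℝ))) :
    ∃ L : List (ℝ × ℝ), (∀ a, a ∈ L ↔ a ∈ P) ∧ L.Pairwise (fun a b => a.1 < b.1) := by
  set L := P.toList.mergeSort fun a b => decide (a.1 ≤ b.1)
  have hmem : ∀ a, a ∈ L ↔ a ∈ P := by simp [L]
  have hle : L.Pairwise fun a b => a.1 ≤ b.1 := by
    simpa using List.pairwise_mergeSort (le := fun a b => decide (a.1 ≤ b.1))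
      (fun _ _ _ hab hbc => by simp only [decide_eq_true_eq] at *; exact hab.trans hbc)
      (fun a b => by simpa using le_total a.1 b.1) P.toList
  have hnodup : L.Nodup := (List.mergeSort_perm _ _).nodup_iff.2 P.nodup_toList
  refine ⟨L, hmem, (hle.and hnodup).imp_of_mem fun ha hb h => h.1.lt_of_ne fun heq =>
    h.2 (hx ((hmem _).1 ha) ((hmem _).1 hb) heq)⟩

theorem isNWChain_of_forall_not_isShadowed {P : Finset (ℝ × ℝ)} {L : List (ℝ × ℝ)}
    (hL : ∀ a, a ∈ L ↔ a ∈ P) (hsort : L.Pairwise (fun a b => a.1 < b.1))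
    (hy : Set.InjOn Prod.snd (P : Set (ℝ × ℝ))) (hsh : ∀ b ∈ P, ¬IsShadowed P b) :
    IsNWChain L := by
  have hmem : ∀ i (hi : i < L.length), L[i] ∈ P := fun i hi => (hL _).1 (List.getElem_mem hi)
  have hlt : ∀ i j (hij : i < j) (hj : j < L.length), L[i].1 < L[j].1 :=
    fun i j hij hj => List.pairwise_iff_getElem.1 hsort i j (by omega) hj hij
  refine ⟨List.isChain_iff_getElem.2 fun i hi => hlt i (i + 1) (by omega) hi,
    List.isChain_iff_getElem.2 fun i hi => ?_, fun i hi q hq => ?_⟩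
  · by_contra hle
    have hne : L[i + 1].2 ≠ L[i].2 := fun h =>
      (hlt i (i + 1) (by omega) hi).ne' (congrArg Prod.fst (hy (hmem _ hi) (hmem i (by omega)) h))
    exact hsh _ (hmem _ hi) (Or.inl ⟨L[i], hmem i (by omega), hlt i (i + 1) (by omega) hi,
      lt_of_le_of_ne (not_lt.1 hle) hne⟩)
  · obtain ⟨j, hj, rfl⟩ := List.getElem_of_mem hq
    by_contra hpos
    push Not at hpos
    -- `q` lies outside the x-range of the edge, so an endpoint of the edge is below a chord
    rcases lt_trichotomy j i with hji | rfl | hij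
    · have hcross : cross L[j] L[i + 1] L[i] = -cross L[i] L[i + 1] L[j] := by unfold cross; ring
      exact hsh _ (hmem i (by omega)) (Or.inr ⟨L[j], hmem j hj, L[i + 1], hmem _ hi,
        hlt j i hji (by omega), hlt i (i + 1) (by omega) hi, by linarith⟩)
    · exact hpos.ne' (cross_self_left _ _)
    · rcases (Nat.succ_le_of_lt hij).eq_or_lt with rfl | hij'
      · exact hpos.ne' (cross_self_right _ _)
      · have hcross : cross L[i] L[j] L[i + 1] = -cross L[i] L[i + 1] L[j] := by unfold cross; ring
        exact hsh _ (hmem _ hi) (Or.inr ⟨L[i], hmem i (by omega), L[j], hmem j hj,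
          hlt i (i + 1) (by omega) hi, hlt (i + 1) j hij' hj, by linarith⟩)

theorem exists_isNWHullChain (P : Finset (ℝ × ℝ)) (hP : P.Nonempty)
    (hx : Set.InjOn Prod.fst (P : Set (ℝ × ℝ))) (hy : Set.InjOn Prod.snd (P : Set (ℝ × ℝ))) :
    ∃ H, IsNWHullChain P H := by
  induction P using Finset.strongInduction with
  | H P ih =>
    by_cases hsh : ∃ b ∈ P, IsShadowed P b
    · obtain ⟨b, hb, hbP⟩ := hsh
      have hsub : (P.erase b : Set (ℝ × ℝ)) ⊆ P :=
        Finset.coe_subset.2 (Finset.erase_subset b P)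
      obtain ⟨H, hH⟩ := ih _ (Finset.erase_ssubset hb) hbP.erase_self.nonempty (hx.mono hsub)
        (hy.mono hsub)
      exact ⟨H, hH.of_erase (hH.dominates_of_isShadowed (hx.mono hsub) hbP.erase_self)⟩
    · push Not at hsh
      obtain ⟨L, hL, hsort⟩ := P.exists_list_pairwise_fst_lt hx
      obtain ⟨p, hp⟩ := hP
      exact ⟨L, List.ne_nil_of_mem ((hL p).2 hp), fun q hq => (hL q).1 hq,
        isNWChain_of_forall_not_isShadowed hL hsort hy hsh,
        fun q hq hqL => absurd ((hL q).2 hq) hqL⟩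

theorem nw_hull_chain_exists_unique (P : Finset (ℝ × ℝ)) (hP : P.Nonempty)
    (hx : ∀ p ∈ P, ∀ q ∈ P, p ≠ q → p.1 ≠ q.1)
    (hy : ∀ p ∈ P, ∀ q ∈ P, p ≠ q → p.2 ≠ q.2) :
    ∃! H : List (ℝ × ℝ), IsNWHullChain P H := by
  have hx' : Set.InjOn Prod.fst (P : Set (ℝ × ℝ)) := fun p hp q hq h =>
    by_contra fun hpq => hx p hp q hq hpq h
  have hy' : Set.InjOn Prod.snd (P : Set (ℝ × ℝ)) := fun p hp q hq h =>
    by_contra fun hpq => hy p hp q hq hpq h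
  obtain ⟨H, hH⟩ := exists_isNWHullChain P hP hx' hy'
  exact ⟨H, hH, fun H' hH' => hH'.unique hH hx'⟩
end

section
/- If p is an extreme point (convex hull vertex) of a finite planar set P with distinct coordinates, then p lies on at least one of the four directional hull chains of P (northwest, northeast, southwest, southeast); conversely, the union of the four directional hull chains contains the set of extreme points of P. -/
/- Rotation of the plane by 90 degrees (clockwise). -/
def rot (p : ℝ × ℝ) : ℝ × ℝ := (p.2, -p.1)

/-!
An extreme point `p` is separated from the other points by a line: some linear functional
`(x, y) ↦ α x + β y` attains its maximum over `P` exactly at `p`. Rotating the plane by a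
quarter turn rotates `(α, β)` too, so after at most three rotations `α ≤ 0 ≤ β`. A point
dominated by the northwest hull chain lies weakly south-east of a chain point, or strictly
below a chain edge, and in either case it cannot be the unique maximizer of such a
functional; hence `p` is on the chain.
-/

def IsStrictMaxOn (α β : ℝ) (P : Finset (ℝ × ℝ)) (p : ℝ × ℝ) : Prop :=
  ∀ q ∈ P, q ≠ p → α * q.1 + β * q.2 < α * p.1 + β * p.2

lemma exists_isStrictMaxOn_of_notMem_convexHull_erase {P : Finset (ℝ × ℝ)} {p : ℝ × ℝ}
    (hext : p ∉ convexHull ℝ ((P.erase p : Finset (ℝ × ℝ)) : Set (ℝ × ℝ))) :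
    ∃ α β, IsStrictMaxOn α β P p := by
  obtain ⟨f, u, hfu, hup⟩ :=
    geometric_hahn_banach_closed_point (convex_convexHull ℝ _)
      ((P.erase p).finite_toSet.isCompact_convexHull ℝ).isClosed hext
  have hf (q : ℝ × ℝ) : f q = f (1, 0) * q.1 + f (0, 1) * q.2 := calc
    f q = f (q.1 • (1, 0) + q.2 • (0, 1)) := by congr 1; ext <;> simp
    _ = f (1, 0) * q.1 + f (0, 1) * q.2 := by simp only [map_add, map_smul, smul_eq_mul, mul_comm]
  refine ⟨f (1, 0), f (0, 1), fun q hq hqp => ?_⟩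
  rw [← hf, ← hf]
  exact (hfu q (subset_convexHull ℝ _ (by simp [hqp, hq]))).trans hup

namespace IsStrictMaxOn

variable {α β : ℝ} {P : Finset (ℝ × ℝ)} {p : ℝ × ℝ}

lemma image_rot (h : IsStrictMaxOn α β P p) : IsStrictMaxOn β (-α) (P.image rot) (rot p) := by
  rintro _ hq' hne
  obtain ⟨q, hq, rfl⟩ := Finset.mem_image.1 hq'
  have := h q hq (by rintro rfl; exact hne rfl)
  simp only [rot]
  linarith

lemma not_lt_of_le (h : IsStrictMaxOn α β P p) (hα : α ≤ 0) (hβ : 0 ≤ β)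
    {q : ℝ × ℝ} (hq : q ∈ P) (hqp₁ : q.1 ≤ p.1) : ¬ p.2 < q.2 := by
  intro hpq₂
  have := h q hq (by rintro rfl; exact lt_irrefl _ hpq₂)
  nlinarith

lemma not_cross_neg (h : IsStrictMaxOn α β P p) (hβ : 0 ≤ β) {a b : ℝ × ℝ}
    (ha : a ∈ P) (hb : b ∈ P) (hap : a.1 ≤ p.1) (hpb : p.1 ≤ b.1) : ¬ cross a b p < 0 := by
  intro hc
  unfold cross at hc
  have hfa := h a ha (by rintro rfl; simp at hc)
  have hfb := h b hb (by rintro rfl; linarith [mul_comm (b.1 - a.1) (b.2 - a.2)])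
  -- `(b.1 - p.1) • a + (p.1 - a.1) • b - (b.1 - a.1) • p = (0, -cross a b p)`
  have hcomb : (b.1 - a.1) * (α * p.1 + β * p.2) ≤
      (b.1 - p.1) * (α * a.1 + β * a.2) + (p.1 - a.1) * (α * b.1 + β * b.2) := by
    nlinarith [mul_nonneg hβ (neg_nonneg.2 hc.le)]
  rcases hpb.lt_or_eq with hpb | hpb
  · nlinarith [mul_lt_mul_of_pos_left hfa (sub_pos.2 hpb),
      mul_le_mul_of_nonneg_left hfb.le (sub_nonneg.2 hap)]
  · have hap : a.1 < p.1 := hap.lt_of_ne fun hap => by rw [hap, hpb] at hc; simp at hc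
    nlinarith [mul_lt_mul_of_pos_left hfb (sub_pos.2 hap),
      mul_le_mul_of_nonneg_left hfa.le (sub_nonneg.2 hpb.ge)]

lemma not_dominates (h : IsStrictMaxOn α β P p) (hα : α ≤ 0) (hβ : 0 ≤ β)
    {H : List (ℝ × ℝ)} (hne : H ≠ []) (hHP : ∀ q ∈ H, q ∈ P) : ¬ Dominates H p := by
  rintro (⟨hhead₁, hhead₂⟩ | ⟨hlast₁, hlast₂⟩ | ⟨i, hi, ha, hb, hc⟩)
  · exact h.not_lt_of_le hα hβ (hHP _ (List.head!_mem_self hne)) hhead₁.ge hhead₂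
  · refine h.not_lt_of_le hα hβ (hHP _ ?_) hlast₁ hlast₂
    rw [List.getLast!_eq_getLast?_getD, List.getLast?_eq_some_getLast hne]
    exact List.getLast_mem hne
  · rw [getElem!_pos H i (by omega)] at ha hc
    rw [getElem!_pos H (i + 1) hi] at hb hc
    exact h.not_cross_neg hβ (hHP _ (List.getElem_mem _)) (hHP _ (List.getElem_mem _)) ha hb hc

lemma mem_of_isNWHullChain (h : IsStrictMaxOn α β P p) (hα : α ≤ 0) (hβ : 0 ≤ β)
    (hp : p ∈ P) {H : List (ℝ × ℝ)} (hH : IsNWHullChain P H) : p ∈ H := by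
  obtain ⟨hne, hHP, -, hdom⟩ := hH
  by_contra hpH
  exact h.not_dominates hα hβ hne hHP (hdom p hp hpH)

end IsStrictMaxOn

theorem extreme_point_on_some_quarter_hull_general (P : Finset (ℝ × ℝ))
    (H0 H1 H2 H3 : List (ℝ × ℝ))
    (h0 : IsNWHullChain P H0)
    (h1 : IsNWHullChain (P.image rot) H1)
    (h2 : IsNWHullChain ((P.image rot).image rot) H2)
    (h3 : IsNWHullChain (((P.image rot).image rot).image rot) H3)
    (p : ℝ × ℝ) (hp : p ∈ P)
    (hext : p ∉ convexHull ℝ ((P.erase p : Finset (ℝ × ℝ)) : Set (ℝ × ℝ))) :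
    p ∈ H0 ∨ rot p ∈ H1 ∨ rot (rot p) ∈ H2 ∨ rot (rot (rot p)) ∈ H3 := by
  obtain ⟨α, β, hf0⟩ := exists_isStrictMaxOn_of_notMem_convexHull_erase hext
  have hf1 := hf0.image_rot
  have hf2 := hf1.image_rot
  have hf3 := hf2.image_rot
  have hp1 := Finset.mem_image_of_mem rot hp
  have hp2 := Finset.mem_image_of_mem rot hp1
  have hp3 := Finset.mem_image_of_mem rot hp2
  rcases le_total α 0 with hα | hα <;> rcases le_total β 0 with hβ | hβ
  · exact Or.inr <| Or.inl <| hf1.mem_of_isNWHullChain hβ (neg_nonneg.2 hα) hp1 h1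
  · exact Or.inl <| hf0.mem_of_isNWHullChain hα hβ hp h0
  · exact Or.inr <| Or.inr <| Or.inl <|
      hf2.mem_of_isNWHullChain (neg_nonpos.2 hα) (neg_nonneg.2 hβ) hp2 h2
  · exact Or.inr <| Or.inr <| Or.inr <|
      hf3.mem_of_isNWHullChain (neg_nonpos.2 hβ) (by rwa [neg_neg]) hp3 h3

theorem extreme_point_on_some_quarter_hull (P : Finset (ℝ × ℝ))
    (hx : ∀ p ∈ P, ∀ q ∈ P, p ≠ q → p.1 ≠ q.1)
    (hy : ∀ p ∈ P, ∀ q ∈ P, p ≠ q → p.2 ≠ q.2)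
    (H0 H1 H2 H3 : List (ℝ × ℝ))
    (h0 : IsNWHullChain P H0)
    (h1 : IsNWHullChain (P.image rot) H1)
    (h2 : IsNWHullChain ((P.image rot).image rot) H2)
    (h3 : IsNWHullChain (((P.image rot).image rot).image rot) H3)
    (p : ℝ × ℝ) (hp : p ∈ P)
    (hext : p ∉ convexHull ℝ ((P.erase p : Finset (ℝ × ℝ)) : Set (ℝ × ℝ))) :
    p ∈ H0 ∨ rot p ∈ H1 ∨ rot (rot p) ∈ H2 ∨ rot (rot (rot p)) ∈ H3 :=
  extreme_point_on_some_quarter_hull_general P H0 H1 H2 H3 h0 h1 h2 h3 p hp hext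
end

section
/- In a plane sweep by increasing y-coordinate, the most recently inserted point is the tail of the current northwest hull chain: if p has the largest y-coordinate in a finite set P with distinct coordinates, then p is the endpoint of maximal y of the northwest hull chain of P. -/
lemma mem_rel_getLast {α} {R : α → α → Prop} :
    ∀ {l : List α} (h : l ≠ []), l.Pairwise R → ∀ x ∈ l, x = l.getLast h ∨ R x (l.getLast h) := by
  intro l
  induction l with
  | nil => intro h; simp at h
  | cons a t ih =>
    intro h hpw x hx
    rcases List.pairwise_cons.1 hpw with ⟨ha, hpt⟩
    cases t with
    | nil => simp at hx; left; simpa [List.getLast]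
    | cons b s =>
      have hne : (b :: s : List α) ≠ [] := by simp
      rw [List.getLast_cons hne]
      rcases List.mem_cons.1 hx with rfl | hxt
      · right; exact ha _ (List.getLast_mem hne)
      · exact ih hne hpt x hxt

theorem topmost_is_tail_of_nw_hull (P : Finset (ℝ × ℝ))
    (hx : ∀ p ∈ P, ∀ q ∈ P, p ≠ q → p.1 ≠ q.1)
    (hy : ∀ p ∈ P, ∀ q ∈ P, p ≠ q → p.2 ≠ q.2)
    (H : List (ℝ × ℝ)) (hH : IsNWHullChain P H)
    (p : ℝ × ℝ) (hp : p ∈ P) (htop : ∀ q ∈ P, q ≠ p → q.2 < p.2) :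
    H.getLast! = p := by
  obtain ⟨hne, hsub, ⟨hcx, hcy, _⟩, hdom⟩ := hH
  have hglast : H.getLast! = H.getLast hne := by
    exact List.getLast!_of_getLast? (List.getLast?_eq_getLast hne)
  rw [hglast]
  by_contra hneq
  have htmem : H.getLast hne ∈ H := List.getLast_mem hne
  have hty : (H.getLast hne).2 < p.2 := htop _ (hsub _ htmem) hneq
  by_cases hpH : p ∈ H
  · haveI : IsTrans (ℝ × ℝ) (fun a b => a.2 < b.2) := ⟨fun _ _ _ => lt_trans⟩
    have hpw : H.Pairwise (fun a b => a.2 < b.2) := List.isChain_iff_pairwise.1 hcy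
    rcases mem_rel_getLast hne hpw p hpH with h | h
    · exact hneq h.symm
    · linarith
  · rcases hdom p hp hpH with ⟨_, h2⟩ | ⟨_, h2⟩ | ⟨i, hi, hix, hix2, hcr⟩
    · have hh : H.head! = H.head hne := by
        rw [List.head!_eq_head?, List.head?_eq_head hne, Option.getD_some]
      have hm : H.head hne ∈ H := List.head_mem hne
      have : (H.head hne).2 < p.2 := htop _ (hsub _ hm) (by rintro rfl; exact hpH hm)
      rw [hh] at h2; linarith
    · rw [hglast] at h2; linarith
    · have hi' : i < H.length := Nat.lt_of_succ_lt hi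
      have ea : H[i]! = H[i]'hi' := getElem!_pos H i hi'
      have eb : H[i+1]! = H[i+1]'hi := getElem!_pos H (i+1) hi
      set a := H[i]'hi'
      set b := H[i+1]'hi
      have hamem : a ∈ H := List.getElem_mem hi'
      have hbmem : b ∈ H := List.getElem_mem hi
      have ha2 : a.2 < p.2 := htop _ (hsub _ hamem) (by rintro rfl; exact hpH hamem)
      have hb2 : b.2 < p.2 := htop _ (hsub _ hbmem) (by rintro rfl; exact hpH hbmem)
      rw [ea] at hix hcr
      rw [eb] at hix2 hcr
      have key : (0:ℝ) ≤ cross a b p := by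
        have h1 : (0:ℝ) ≤ (b.1 - p.1) * (p.2 - a.2) :=
          mul_nonneg (by linarith) (by linarith)
        have h2 : (0:ℝ) ≤ (p.1 - a.1) * (p.2 - b.2) :=
          mul_nonneg (by linarith) (by linarith)
        unfold cross; nlinarith
      linarith
end

section
/- Monotonicity of layer depth: if Q ⊆ P are finite planar point sets and p ∈ Q, then the convex-layer depth of p with respect to Q is at most its depth with respect to P. -/
/-!
A point that is extreme in a set stays extreme in every subset containing it. Hence, by
induction on the stage, `peel Q i ⊆ peel P i` for `Q ⊆ P`; so if `p` is peeled off from `P` at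
stage `d`, then either it was already peeled off from `Q` earlier, or it survives in
`peel Q d ⊆ peel P d` and is extreme there. Depth is well defined because every nonempty finite
set has an extreme point, so each round of peeling removes at least one point.
-/

open Classical in
noncomputable def extremePts (S : Finset (ℝ × ℝ)) : Finset (ℝ × ℝ) :=
  S.filter fun x => x ∉ convexHull ℝ ((S.erase x : Finset (ℝ × ℝ)) : Set (ℝ × ℝ))

noncomputable def peel (P : Finset (ℝ × ℝ)) : ℕ → Finset (ℝ × ℝ)
  | 0 => P
  | i + 1 => peel P i \ extremePts (peel P i)

noncomputable def layer (P : Finset (ℝ × ℝ)) (i : ℕ) : Finset (ℝ × ℝ) :=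
  extremePts (peel P i)

/- Stages are counted from `0`, so this is one less than the depth `i` of the paper,
where `S₁ = S`. -/
noncomputable def depth (S : Finset (ℝ × ℝ)) (p : ℝ × ℝ) : ℕ :=
  sInf {i : ℕ | p ∈ extremePts (peel S i)}

open Finset

section ExtremePts

variable {S T : Finset (ℝ × ℝ)} {x : ℝ × ℝ}

lemma mem_extremePts :
    x ∈ extremePts S ↔ x ∈ S ∧ x ∉ convexHull ℝ (S.erase x : Set (ℝ × ℝ)) := by
  classical simp [extremePts]

lemma extremePts_subset (S : Finset (ℝ × ℝ)) : extremePts S ⊆ S :=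
  fun _ hx => (mem_extremePts.1 hx).1

lemma mem_extremePts_of_subset (hST : S ⊆ T) (hxS : x ∈ S) (hx : x ∈ extremePts T) :
    x ∈ extremePts S := by
  rw [mem_extremePts] at hx ⊢
  exact ⟨hxS, fun h => hx.2 (convexHull_mono (by exact_mod_cast erase_subset_erase x hST) h)⟩

lemma extremePts_nonempty (hS : S.Nonempty) : (extremePts S).Nonempty := by
  obtain ⟨x, hx⟩ := (S.finite_toSet.isCompact_convexHull (𝕜 := ℝ)).extremePoints_nonempty
    (convexHull_nonempty_iff.2 (by exact_mod_cast hS))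
  have hx' :=
    (convex_convexHull ℝ (S : Set (ℝ × ℝ))).mem_extremePoints_iff_mem_sdiff_convexHull_sdiff.1 hx
  refine ⟨x, mem_extremePts.2 ⟨extremePoints_convexHull_subset hx, fun hmem => hx'.2 ?_⟩⟩
  refine convexHull_mono (fun y hy => ?_) hmem
  rw [coe_erase] at hy
  exact ⟨subset_convexHull ℝ _ hy.1, hy.2⟩

end ExtremePts

section Peel

variable {S : Finset (ℝ × ℝ)} {p : ℝ × ℝ}

lemma peel_mono {Q P : Finset (ℝ × ℝ)} (hQP : Q ⊆ P) (i : ℕ) : peel Q i ⊆ peel P i := by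
  induction i with
  | zero => exact hQP
  | succ i ih =>
    intro x hx
    rw [peel, mem_sdiff] at hx ⊢
    exact ⟨ih hx.1, fun h => hx.2 (mem_extremePts_of_subset ih hx.1 h)⟩

lemma mem_peel_iff {k : ℕ} : p ∈ peel S k ↔ p ∈ S ∧ ∀ j < k, p ∉ layer S j := by
  induction k with
  | zero => simp [peel]
  | succ k ih =>
    rw [peel, mem_sdiff, ih, Nat.forall_lt_succ_right]
    exact and_assoc

lemma card_peel_le (S : Finset (ℝ × ℝ)) (i : ℕ) : #(peel S i) ≤ #S - i := by
  induction i with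
  | zero => exact le_rfl
  | succ i ih =>
    have hcard : #(peel S (i + 1)) = #(peel S i) - #(extremePts (peel S i)) :=
      card_sdiff_of_subset (extremePts_subset _)
    rcases (peel S i).eq_empty_or_nonempty with hempty | hne
    · simp [hcard, hempty]
    · have := (extremePts_nonempty hne).card_pos
      omega

lemma peel_card_eq_empty (S : Finset (ℝ × ℝ)) : peel S #S = ∅ := by
  simpa using card_peel_le S #S

end Peel

section Depth

variable {S : Finset (ℝ × ℝ)} {p : ℝ × ℝ}

lemma exists_mem_layer (hp : p ∈ S) : ∃ i, p ∈ layer S i := by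
  have hout : p ∉ peel S #S := by simp [peel_card_eq_empty]
  simp only [mem_peel_iff, not_and, not_forall, not_not] at hout
  obtain ⟨i, -, hi⟩ := hout hp
  exact ⟨i, hi⟩

lemma mem_layer_depth (hp : p ∈ S) : p ∈ layer S (depth S p) :=
  Nat.sInf_mem (exists_mem_layer hp)

lemma depth_le_of_mem_layer {i : ℕ} (h : p ∈ layer S i) : depth S p ≤ i :=
  Nat.sInf_le h

lemma exists_le_mem_layer_of_subset {Q P : Finset (ℝ × ℝ)} (hQP : Q ⊆ P) (hp : p ∈ Q) {d : ℕ}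
    (h : p ∈ layer P d) : ∃ j ≤ d, p ∈ layer Q j := by
  by_contra! hnot
  have hpeel : p ∈ peel Q d := mem_peel_iff.2 ⟨hp, fun j hj => hnot j hj.le⟩
  exact hnot d le_rfl (mem_extremePts_of_subset (peel_mono hQP d) hpeel h)

end Depth

theorem depth_mono (P Q : Finset (ℝ × ℝ)) (hQP : Q ⊆ P) (p : ℝ × ℝ) (hp : p ∈ Q) :
    depth Q p ≤ depth P p := by
  obtain ⟨j, hj, hmem⟩ := exists_le_mem_layer_of_subset hQP hp (mem_layer_depth (hQP hp))
  exact (depth_le_of_mem_layer hmem).trans hj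
end
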